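/- Let d ≥ 1 and let Y₁,…,Y_d be independent random variables with means μ₁,…,μ_d such that for each i and each δ > 0, P(|Y_i − μ_i| > δ) ≤ exp(−n_i·δ²/2) where n_i ≥ n_min > 0. Let a₁,…,a_d be reals, c = ∑|a_i|, Ŷ = ∑ a_i·Y_i and μ = ∑ a_i·μ_i. Then for ε ≥ √((2·ln d + 4·ln N)·c²/n_min) with N ≥ 1, P(|Ŷ − μ| > ε) ≤ d·exp(−n_min·ε²/(2c²)) ≤ N^{−2}. -/

import Mathlib

open MeasureTheory ProbabilityTheory

/-
If every |Yᵢ - μᵢ| is at most ε / c with c = ∑ |aᵢ|, then |Ŷ - μ| ≤ ∑ |aᵢ| · ε / c = ε.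
So the event |Ŷ - μ| > ε lies in the union of the d events |Yᵢ - μᵢ| > ε / c, each of probability
at most exp (-n_min ε² / (2c²)); the union bound gives the first estimate.
The lower bound on ε is exactly what makes d · exp (-n_min ε² / (2c²)) ≤ exp (-2 log N) = N⁻².
-/

lemma abs_sum_mul_sub_sum_mul_le {ι : Type*} (s : Finset ι) (a x y : ι → ℝ) {δ : ℝ}
    (h : ∀ i ∈ s, |x i - y i| ≤ δ) :
    |∑ i ∈ s, a i * x i - ∑ i ∈ s, a i * y i| ≤ (∑ i ∈ s, |a i|) * δ := by
  rw [← Finset.sum_sub_distrib, Finset.sum_mul]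
  refine (Finset.abs_sum_le_sum_abs _ _).trans (Finset.sum_le_sum fun i hi => ?_)
  rw [← mul_sub, abs_mul]
  exact mul_le_mul_of_nonneg_left (h i hi) (abs_nonneg _)

lemma measure_abs_sum_mul_sub_gt_le {Ω ι : Type*} [MeasurableSpace Ω] [Fintype ι]
    (P : Measure Ω) (Y : ι → Ω → ℝ) (m a : ι → ℝ) (hpos : 0 < ∑ i, |a i|) (ε : ℝ) :
    P {ω | |(∑ i, a i * Y i ω) - ∑ i, a i * m i| > ε} ≤
      ∑ i, P {ω | |Y i ω - m i| > ε / ∑ i, |a i|} := by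
  have hsub : {ω | |(∑ i, a i * Y i ω) - ∑ i, a i * m i| > ε} ⊆
      ⋃ i, {ω | |Y i ω - m i| > ε / ∑ i, |a i|} := by
    intro ω
    contrapose
    simp only [Set.mem_iUnion, Set.mem_ofPred_eq, not_exists, not_lt]
    intro hsmall
    calc |(∑ i, a i * Y i ω) - ∑ i, a i * m i|
        ≤ (∑ i, |a i|) * (ε / ∑ i, |a i|) :=
          abs_sum_mul_sub_sum_mul_le _ _ _ _ fun i _ => hsmall i
      _ = ε := mul_div_cancel₀ ε hpos.ne'
  calc _ ≤ P (⋃ i, {ω | |Y i ω - m i| > ε / ∑ i, |a i|}) := measure_mono hsub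
    _ ≤ _ := measure_iUnion_fintype_le P _

lemma measure_abs_sub_gt_le_exp {Ω : Type*} [MeasurableSpace Ω] (P : Measure Ω)
    [IsProbabilityMeasure P] (X : Ω → ℝ) (m n k : ℝ) (hk : k ≤ n)
    (htail : ∀ δ : ℝ, 0 < δ → P {ω | |X ω - m| > δ} ≤ ENNReal.ofReal (Real.exp (-n * δ ^ 2 / 2)))
    {δ : ℝ} (hδ : 0 ≤ δ) :
    P {ω | |X ω - m| > δ} ≤ ENNReal.ofReal (Real.exp (-k * δ ^ 2 / 2)) := by
  rcases hδ.eq_or_lt with rfl | hδ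
  · simpa using prob_le_one
  refine (htail δ hδ).trans (ENNReal.ofReal_le_ofReal (Real.exp_le_exp.2 ?_))
  have := mul_le_mul_of_nonneg_right hk (sq_nonneg δ)
  linarith

lemma log_add_two_mul_log_le_of_sqrt_le {d N nmin c ε : ℝ} (hnmin : 0 < nmin) (hc : 0 < c)
    (hε : ε ≥ Real.sqrt ((2 * Real.log d + 4 * Real.log N) * c ^ 2 / nmin)) :
    Real.log d + 2 * Real.log N ≤ nmin * ε ^ 2 / (2 * c ^ 2) := by
  have hε2 := (Real.sqrt_le_iff.1 hε).2
  rw [div_le_iff₀ hnmin] at hε2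
  rw [le_div_iff₀ (by positivity)]
  linarith

lemma mul_exp_neg_le_rpow_neg_two {d N x : ℝ} (hd : 0 ≤ d) (hN : 0 < N)
    (hx : Real.log d + 2 * Real.log N ≤ x) :
    d * Real.exp (-x) ≤ N ^ (-2 : ℝ) := by
  rcases hd.eq_or_lt with rfl | hd
  · rw [zero_mul]
    positivity
  calc d * Real.exp (-x) ≤ d * Real.exp (-(Real.log d + 2 * Real.log N)) := by gcongr
    _ = N ^ (-2 : ℝ) := by
      rw [Real.rpow_def_of_pos hN, neg_add, Real.exp_add, Real.exp_neg, Real.exp_log hd,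
        mul_inv_cancel_left₀ hd.ne']
      ring_nf

theorem stmt_7_general {Ω : Type*} [MeasurableSpace Ω] (P : Measure Ω) [IsProbabilityMeasure P]
    (d : ℕ) (Y : Fin d → Ω → ℝ) (μ : Fin d → ℝ)
    (n : Fin d → ℝ) (nmin : ℝ) (hnmin : 0 < nmin) (hn : ∀ i, n i ≥ nmin)
    (hconc : ∀ i (δ : ℝ), 0 < δ →
      P {ω | |Y i ω - μ i| > δ} ≤ ENNReal.ofReal (Real.exp (-(n i) * δ ^ 2 / 2)))
    (a : Fin d → ℝ) (c : ℝ) (hc : c = ∑ i, |a i|) (hcpos : 0 < c)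
    (N ε : ℝ) (hN : 1 ≤ N)
    (hε : ε ≥ Real.sqrt ((2 * Real.log d + 4 * Real.log N) * c ^ 2 / nmin)) :
    P {ω | |(∑ i, a i * Y i ω) - ∑ i, a i * μ i| > ε} ≤
        ENNReal.ofReal (d * Real.exp (-nmin * ε ^ 2 / (2 * c ^ 2))) ∧
      (d : ℝ) * Real.exp (-nmin * ε ^ 2 / (2 * c ^ 2)) ≤ N ^ (-2 : ℝ) := by
  have hrate : -nmin * (ε / c) ^ 2 / 2 = -nmin * ε ^ 2 / (2 * c ^ 2) := by
    field_simp
  refine ⟨?_, ?_⟩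
  · have hε0 : 0 ≤ ε / c := div_nonneg ((Real.sqrt_nonneg _).trans hε) hcpos.le
    calc P {ω | |(∑ i, a i * Y i ω) - ∑ i, a i * μ i| > ε}
        ≤ ∑ i, P {ω | |Y i ω - μ i| > ε / c} :=
          hc ▸ measure_abs_sum_mul_sub_gt_le P Y μ a (hc ▸ hcpos) ε
      _ ≤ ∑ _i : Fin d, ENNReal.ofReal (Real.exp (-nmin * ε ^ 2 / (2 * c ^ 2))) :=
          Finset.sum_le_sum fun i _ =>
            hrate ▸ measure_abs_sub_gt_le_exp P (Y i) (μ i) (n i) nmin (hn i) (hconc i) hε0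
      _ = ENNReal.ofReal (d * Real.exp (-nmin * ε ^ 2 / (2 * c ^ 2))) := by
          rw [ENNReal.ofReal_mul (Nat.cast_nonneg d)]
          simp
  · rw [neg_mul, neg_div]
    exact mul_exp_neg_le_rpow_neg_two (Nat.cast_nonneg d) (by linarith)
      (log_add_two_mul_log_le_of_sqrt_le hnmin hcpos hε)

theorem stmt_7 {Ω : Type*} [MeasurableSpace Ω] (P : Measure Ω) [IsProbabilityMeasure P]
    (d : ℕ) (hd : 1 ≤ d) (Y : Fin d → Ω → ℝ) (μ : Fin d → ℝ)
    (hmeas : ∀ i, Measurable (Y i))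
    (hindep : iIndepFun Y P)
    (n : Fin d → ℝ) (nmin : ℝ) (hnmin : 0 < nmin) (hn : ∀ i, n i ≥ nmin)
    (hconc : ∀ i (δ : ℝ), 0 < δ →
      P {ω | |Y i ω - μ i| > δ} ≤ ENNReal.ofReal (Real.exp (-(n i) * δ ^ 2 / 2)))
    (a : Fin d → ℝ) (c : ℝ) (hc : c = ∑ i, |a i|) (hcpos : 0 < c)
    (N ε : ℝ) (hN : 1 ≤ N)
    (hε : ε ≥ Real.sqrt ((2 * Real.log d + 4 * Real.log N) * c ^ 2 / nmin)) :
    P {ω | |(∑ i, a i * Y i ω) - ∑ i, a i * μ i| > ε} ≤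
        ENNReal.ofReal (d * Real.exp (-nmin * ε ^ 2 / (2 * c ^ 2))) ∧
      (d : ℝ) * Real.exp (-nmin * ε ^ 2 / (2 * c ^ 2)) ≤ N ^ (-2 : ℝ) :=
  stmt_7_general P d Y μ n nmin hnmin hn hconc a c hc hcpos N ε hN hε
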